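/- For every d ≥ 0: (a) ρ^{(d)} is continuously equivalent to the d-fold jump J^d(ρ), i.e., there exist continuous functions translating, for every x ∈ ℝ, every ρ^{(d)}-name of x into a J^d(ρ)-name of x and vice versa; and (b) ρ_<^{(d)} is continuously equivalent to the d-fold jump J^d(ρ_<) in the same sense. -/

import Mathlib

open Filter Topology

/- The name space `ℕ → ℚ` carries the product topology with `ℚ` discrete. -/
local instance : TopologicalSpace ℚ := ⊥

/-- ρ-name of a real: `|x - q n| ≤ 2^{-n}` for all `n`. -/
def IsRhoName (q : ℕ → ℚ) (x : ℝ) : Prop :=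
  ∀ n : ℕ, |x - (q n : ℝ)| ≤ (2 : ℝ) ^ (-(n : ℤ))

/-- Iterated limits: `IterLim k q x` means the `(k+1)`-fold iterated limit of `q`
(variables paired via `Nat.pair`) exists at every stage and equals `x`. -/
def IterLim : ℕ → (ℕ → ℝ) → ℝ → Prop
  | 0, q, x => Filter.Tendsto q Filter.atTop (nhds x)
  | k+1, q, x => ∃ z : ℕ → ℝ,
      (∀ n, IterLim k (fun m => q (Nat.pair n m)) (z n)) ∧
      Filter.Tendsto z Filter.atTop (nhds x)

/-- ρ^{(k)}-name of a real: for `k = 0` a ρ-name, for `k ≥ 1` all iterated limits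
exist and the `k`-fold iterated limit equals `x`. -/
def IsRhoKName : ℕ → (ℕ → ℚ) → ℝ → Prop
  | 0, q, x => IsRhoName q x
  | k+1, q, x => IterLim k (fun n => (q n : ℝ)) x

/-- Alternating suprema/infima in `EReal`; `true` starts with a supremum.
`AltSupInf k b q` has `k+1` alternating sup/inf levels. -/
noncomputable def AltSupInf : ℕ → Bool → (ℕ → EReal) → EReal
  | 0, b, q => if b then ⨆ n, q n else ⨅ n, q n
  | k+1, b, q =>
      if b then ⨆ n, AltSupInf k false (fun m => q (Nat.pair n m))
      else ⨅ n, AltSupInf k true (fun m => q (Nat.pair n m))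

/-- ρ_<^{(k)}-name of a real: `x = sup inf sup ⋯` (`k+1` alternating sup/inf,
starting with sup, taken in ℝ ∪ {±∞}). -/
noncomputable def IsRhoLtKName (k : ℕ) (q : ℕ → ℚ) (x : ℝ) : Prop :=
  (x : EReal) = AltSupInf k true (fun n => ((q n : ℝ) : EReal))

/-- A ρ_<-name of `x`: a rational sequence with `x = sup_n q n`. -/
noncomputable def IsRhoLtName (q : ℕ → ℚ) (x : ℝ) : Prop :=
  (x : EReal) = ⨆ n, ((q n : ℝ) : EReal)

/-- The jump `J(δ)` of a representation `δ` of ℝ: a `J(δ)`-name of `x` is a double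
sequence (via `Nat.pair`) each of whose rows is eventually constant, the sequence
of row limits being a `δ`-name of `x`. -/
def JumpRep (R : (ℕ → ℚ) → ℝ → Prop) : (ℕ → ℚ) → ℝ → Prop :=
  fun q x => ∃ z : ℕ → ℚ,
    (∀ n : ℕ, ∃ M : ℕ, ∀ m : ℕ, M ≤ m → q (Nat.pair n m) = z n) ∧ R z x

/-- `d`-fold iterated jump `J^d`. -/
def JumpIter : ℕ → ((ℕ → ℚ) → ℝ → Prop) → ((ℕ → ℚ) → ℝ → Prop)
  | 0, R => R
  | k+1, R => JumpRep (JumpIter k R)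


----------------------------------------------------------------
-- Auxiliary infrastructure
----------------------------------------------------------------

instance : DiscreteTopology ℚ := ⟨rfl⟩

def Row (q : ℕ → ℚ) (n : ℕ) : ℕ → ℚ := fun m => q (Nat.pair n m)

def EvConst (f : ℕ → ℚ) (c : ℚ) : Prop := ∃ M, ∀ m, M ≤ m → f m = c

def JRel {α : Type*} (R : (ℕ → ℚ) → α → Prop) : (ℕ → ℚ) → α → Prop :=
  fun q x => ∃ z : ℕ → ℚ, (∀ n, EvConst (Row q n) (z n)) ∧ R z x

def JRelIter {α : Type*} : ℕ → ((ℕ → ℚ) → α → Prop) → ((ℕ → ℚ) → α → Prop)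
  | 0, R => R
  | k+1, R => JRel (JRelIter k R)

def Red {α : Type*} (P : α → Prop) (R R' : (ℕ → ℚ) → α → Prop) : Prop :=
  ∃ F : (ℕ → ℚ) → (ℕ → ℚ), Continuous F ∧ ∀ (x : α) (q : ℕ → ℚ), P x → R q x → R' (F q) x

def TendRep (q : ℕ → ℚ) (x : ℝ) : Prop := Tendsto (fun n => (q n : ℝ)) atTop (nhds x)

def LOp (R : (ℕ → ℚ) → ℝ → Prop) : (ℕ → ℚ) → ℝ → Prop :=
  fun q x => ∃ z : ℕ → ℝ, (∀ n, R (Row q n) (z n)) ∧ Tendsto z atTop (nhds x)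

theorem red_refl {α : Type*} (P : α → Prop) (R : (ℕ → ℚ) → α → Prop) : Red P R R :=
  ⟨id, continuous_id, fun _ _ _ h => h⟩

theorem red_trans {α : Type*} {P : α → Prop} {R R' R'' : (ℕ → ℚ) → α → Prop}
    (h1 : Red P R R') (h2 : Red P R' R'') : Red P R R'' := by
  obtain ⟨F, hF, hFs⟩ := h1; obtain ⟨G, hG, hGs⟩ := h2
  exact ⟨G ∘ F, hG.comp hF, fun x q hP h => hGs x (F q) hP (hFs x q hP h)⟩

theorem continuous_of_dep (F : (ℕ → ℚ) → (ℕ → ℚ))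
    (h : ∀ k, ∃ N, ∀ q q' : ℕ → ℚ, (∀ i < N, q i = q' i) → F q k = F q' k) :
    Continuous F := by
  apply continuous_pi
  intro k
  obtain ⟨N, hN⟩ := h k
  rw [continuous_iff_continuousAt]
  intro q
  have hev : ∀ᶠ q' in nhds q, F q' k = F q k := by
    have hU : IsOpen {q' : ℕ → ℚ | ∀ i < N, q' i = q i} := by
      have : {q' : ℕ → ℚ | ∀ i < N, q' i = q i}
          = Set.pi (↑(Finset.range N)) (fun i => {q i}) := by
        ext q'; simp [Set.mem_pi, Finset.mem_range]
      rw [this]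
      exact isOpen_set_pi (Finset.finite_toSet _) (fun i _ => isOpen_discrete _)
    filter_upwards [hU.mem_nhds (by simp : q ∈ _)] with q' hq'
    exact (hN q' q (fun i hi => hq' i hi))
  exact Tendsto.congr' (by filter_upwards [hev] with q' h using h.symm) tendsto_const_nhds

-- tolerance
def tol (n : ℕ) : ℚ := ((2:ℚ) ^ (n+1))⁻¹

theorem tol_pos (n : ℕ) : 0 < tol n := by
  unfold tol; positivity

theorem tol_cast (n : ℕ) : ((tol n : ℚ) : ℝ) = ((2:ℝ) ^ (n+1))⁻¹ := by
  simp [tol]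

theorem tol_le (n : ℕ) : ((tol n : ℚ) : ℝ) ≤ (2:ℝ) ^ (-(n:ℤ)) := by
  rw [tol_cast, zpow_neg, zpow_natCast]
  apply inv_anti₀ (by positivity)
  exact pow_le_pow_right₀ (by norm_num) (Nat.le_succ n)

-- the bounded plateau predicate
def plat (q : ℕ → ℚ) (n m j : ℕ) : Prop := ∀ i ≤ m, j ≤ i → |q i - q j| ≤ tol n

instance (q : ℕ → ℚ) (n m j : ℕ) : Decidable (plat q n m j) := by
  unfold plat; infer_instance

theorem plat_self (q : ℕ → ℚ) (n m : ℕ) : plat q n m m := by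
  intro i him hmi
  have : i = m := le_antisymm him hmi
  subst this; simp [le_of_lt (tol_pos n)]

def jfun (q : ℕ → ℚ) (n m : ℕ) : ℕ :=
  Nat.find (⟨m, plat_self q n m⟩ : ∃ j, plat q n m j)

theorem jfun_le (q : ℕ → ℚ) (n m : ℕ) : jfun q n m ≤ m :=
  Nat.find_le (plat_self q n m)

def plateauF (q : ℕ → ℚ) : ℕ → ℚ :=
  fun k => q (jfun q (Nat.unpair k).1 (Nat.unpair k).2)

theorem plateauF_continuous : Continuous plateauF := by
  apply continuous_of_dep
  intro k
  refine ⟨(Nat.unpair k).2 + 1, fun q q' hqq => ?_⟩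
  set n := (Nat.unpair k).1; set m := (Nat.unpair k).2
  have hm : ∀ i ≤ m, q i = q' i := fun i hi => hqq i (Nat.lt_succ_of_le hi)
  have hiff : ∀ j ≤ m, (plat q n m j ↔ plat q' n m j) := by
    intro j hj
    unfold plat
    constructor <;> intro h i him hji
    · rw [← hm i him, ← hm j hj]; exact h i him hji
    · rw [hm i him, hm j hj]; exact h i him hji
  have hj : jfun q n m = jfun q' n m := by
    apply le_antisymm
    · apply Nat.find_le
      rw [hiff _ (jfun_le q' n m)]
      exact Nat.find_spec (⟨m, plat_self q' n m⟩ : ∃ j, plat q' n m j)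
    · apply Nat.find_le
      rw [← hiff _ (jfun_le q n m)]
      exact Nat.find_spec (⟨m, plat_self q n m⟩ : ∃ j, plat q n m j)
  show q (jfun q n m) = q' (jfun q' n m)
  rw [hj, hm _ (hj ▸ jfun_le q n m)]

theorem red_tend_jrho : Red (fun _ => True) TendRep (JRel IsRhoName) := by
  classical
  refine ⟨plateauF, plateauF_continuous, ?_⟩
  rintro x q _ hq
  -- for each n there is a true plateau point
  have hQ : ∀ n, ∃ j, ∀ i, j ≤ i → |q i - q j| ≤ tol n := by
    intro n
    have hpos : (0:ℝ) < ((tol n : ℚ):ℝ)/2 := by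
      have := tol_pos n
      have : (0:ℝ) < ((tol n : ℚ):ℝ) := by exact_mod_cast this
      linarith
    have := (Metric.tendsto_atTop.1 hq) (((tol n : ℚ):ℝ)/2) hpos
    obtain ⟨N, hN⟩ := this
    refine ⟨N, fun i hi => ?_⟩
    have h1 := hN i hi
    have h2 := hN N le_rfl
    rw [Real.dist_eq] at h1 h2
    have : |((q i : ℝ)) - (q N : ℝ)| ≤ ((tol n : ℚ):ℝ) := by
      calc |((q i : ℝ)) - (q N : ℝ)| ≤ |(q i : ℝ) - x| + |x - (q N : ℝ)| := abs_sub_le _ _ _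
      _ ≤ ((tol n : ℚ):ℝ)/2 + ((tol n : ℚ):ℝ)/2 := by
          rw [abs_sub_comm ((q i : ℝ)) x] at h1 ⊢
          exact add_le_add (le_of_lt h1) (le_of_lt (by rwa [abs_sub_comm] at h2))
      _ = ((tol n : ℚ):ℝ) := by ring
    exact_mod_cast (by push_cast at this ⊢; exact this : |((q i : ℝ)) - (q N : ℝ)| ≤ ((tol n:ℚ):ℝ))
  set J : ℕ → ℕ := fun n => Nat.find (hQ n) with hJdef
  refine ⟨fun n => q (J n), ?_, ?_⟩
  · -- rows eventually constant
    intro n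
    -- witnesses of failure for j < J n
    have hfail : ∀ j < J n, ∃ i, j ≤ i ∧ ¬(|q i - q j| ≤ tol n) := by
      intro j hj
      have := Nat.find_min (hQ n) hj
      push_neg at this
      obtain ⟨i, hi1, hi2⟩ := this
      exact ⟨i, hi1, not_le_of_gt hi2⟩
    choose wit hwit1 hwit2 using hfail
    set M : ℕ := max (J n) ((Finset.range (J n)).sup
      (fun j => if h : j < J n then wit j h else 0)) with hM
    refine ⟨M, fun m hm => ?_⟩
    have hJm : J n ≤ m := le_trans (le_max_left _ _) hm
    -- jfun q n m = J n
    have : jfun q n m = J n := by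
      have hPJ : plat q n m (J n) := by
        intro i _ hji
        exact Nat.find_spec (hQ n) i hji
      apply le_antisymm
      · exact Nat.find_le hPJ
      · by_contra hlt
        push_neg at hlt
        have hjlt : jfun q n m < J n := hlt
        have hP : plat q n m (jfun q n m) := Nat.find_spec _
        have hw1 := hwit1 _ hjlt
        have hw2 := hwit2 _ hjlt
        have hwle : wit _ hjlt ≤ m := by
          refine le_trans ?_ hm
          refine le_trans ?_ (le_max_right _ _)
          have : jfun q n m ∈ Finset.range (J n) := Finset.mem_range.2 hjlt
          have hs := Finset.le_sup (f := fun j => if h : j < J n then wit j h else 0) this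
          simpa [hjlt] using hs
        exact hw2 (hP _ hwle hw1)
    show Row (plateauF q) n m = q (J n)
    simp only [Row, plateauF, Nat.unpair_pair]
    rw [this]
  · -- ρ-name property
    intro n
    have hspec := Nat.find_spec (hQ n)
    -- |x - q (J n)| ≤ tol n by taking limits
    have hlim : Tendsto (fun i => |(q i : ℝ) - (q (J n) : ℝ)|) atTop
        (nhds (|x - (q (J n) : ℝ)|)) := by
      exact ((hq.sub tendsto_const_nhds).abs)
    have hev : ∀ᶠ i in atTop, |(q i : ℝ) - (q (J n) : ℝ)| ≤ ((tol n : ℚ) : ℝ) := by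
      filter_upwards [eventually_ge_atTop (J n)] with i hi
      have := hspec i hi
      have : |q i - q (J n)| ≤ tol n := this
      exact_mod_cast (by push_cast; exact_mod_cast this : |(q i : ℝ) - (q (J n):ℝ)| ≤ ((tol n:ℚ):ℝ))
    have := le_of_tendsto hlim hev
    exact le_trans this (tol_le n)

/-- the row-wise application of a translator -/
def rowMap (F : (ℕ → ℚ) → (ℕ → ℚ)) (q : ℕ → ℚ) : ℕ → ℚ :=
  fun k => F (Row q (Nat.unpair k).1) (Nat.unpair k).2

theorem row_rowMap (F : (ℕ → ℚ) → (ℕ → ℚ)) (q : ℕ → ℚ) (n : ℕ) :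
    Row (rowMap F q) n = F (Row q n) := by
  funext m; simp [Row, rowMap]

theorem continuous_row (n : ℕ) : Continuous (fun q : ℕ → ℚ => Row q n) :=
  continuous_pi (fun m => continuous_apply _)

theorem continuous_rowMap {F : (ℕ → ℚ) → (ℕ → ℚ)} (hF : Continuous F) :
    Continuous (rowMap F) :=
  continuous_pi fun k => (continuous_apply _).comp (hF.comp (continuous_row _))

/-- the column-wise application of a translator (for the jump functor) -/
def colMap (F : (ℕ → ℚ) → (ℕ → ℚ)) (q : ℕ → ℚ) : ℕ → ℚ :=
  fun k => F (fun i => q (Nat.pair i (Nat.unpair k).2)) (Nat.unpair k).1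

theorem continuous_colMap {F : (ℕ → ℚ) → (ℕ → ℚ)} (hF : Continuous F) :
    Continuous (colMap F) :=
  continuous_pi fun k => (continuous_apply _).comp
    (hF.comp (continuous_pi fun i => continuous_apply _))

/-- jump functor: a reduction lifts through the jump -/
theorem jrel_functor {α : Type*} {P : α → Prop} {R R' : (ℕ → ℚ) → α → Prop}
    (h : Red P R R') : Red P (JRel R) (JRel R') := by
  obtain ⟨F, hF, hFs⟩ := h
  refine ⟨colMap F, continuous_colMap hF, ?_⟩
  rintro x q hP ⟨z, hz, hR⟩
  refine ⟨F z, ?_, hFs x z hP hR⟩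
  intro n
  -- column guesses tend to z in the product topology
  have hcol : Tendsto (fun m => (fun i => q (Nat.pair i m))) atTop (nhds z) := by
    rw [tendsto_pi_nhds]
    intro i
    obtain ⟨M, hM⟩ := hz i
    exact Tendsto.congr' (by filter_upwards [eventually_ge_atTop M] with m hm
      using (hM m hm).symm) tendsto_const_nhds
  have hopen : IsOpen {w : ℕ → ℚ | F w n = F z n} :=
    (isOpen_discrete {F z n}).preimage ((continuous_apply n).comp hF)
  have := hcol.eventually_mem (hopen.mem_nhds (by simp))
  rw [eventually_atTop] at this
  obtain ⟨M, hM⟩ := this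
  refine ⟨M, fun m hm => ?_⟩
  have h2 := hM m hm
  simpa [Row, colMap] using h2

theorem jreliter_functor {α : Type*} {P : α → Prop} {R R' : (ℕ → ℚ) → α → Prop}
    (h : Red P R R') (k : ℕ) : Red P (JRelIter k R) (JRelIter k R') := by
  induction k with
  | zero => exact h
  | succ k ih => exact jrel_functor ih

theorem jreliter_succ' {α : Type*} (k : ℕ) (R : (ℕ → ℚ) → α → Prop) :
    JRelIter (k+1) R = JRelIter k (JRel R) := by
  induction k with
  | zero => rfl
  | succ k ih => show JRel (JRelIter (k+1) R) = _ ; rw [ih]; rfl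

theorem lop_functor {P : ℝ → Prop} {R R' : (ℕ → ℚ) → ℝ → Prop}
    (h : Red (fun _ => True) R R') : Red P (LOp R) (LOp R') := by
  obtain ⟨F, hF, hFs⟩ := h
  refine ⟨rowMap F, continuous_rowMap hF, ?_⟩
  rintro x q _ ⟨z, hz, ht⟩
  exact ⟨z, fun n => (row_rowMap F q n) ▸ hFs (z n) (Row q n) trivial (hz n), ht⟩

def sw1 (q : ℕ → ℚ) : ℕ → ℚ := fun j =>
  q (Nat.pair (Nat.unpair (Nat.unpair j).1).1
      (Nat.pair (Nat.unpair (Nat.unpair j).1).2 (Nat.unpair j).2))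
def sw2 (q : ℕ → ℚ) : ℕ → ℚ := fun j =>
  q (Nat.pair (Nat.pair (Nat.unpair j).1 (Nat.unpair (Nat.unpair j).2).1)
      (Nat.unpair (Nat.unpair j).2).2)

theorem continuous_sw1 : Continuous sw1 := continuous_pi fun _ => continuous_apply _
theorem continuous_sw2 : Continuous sw2 := continuous_pi fun _ => continuous_apply _

theorem swap_LJ {P : ℝ → Prop} (R : (ℕ → ℚ) → ℝ → Prop) :
    Red P (LOp (JRel R)) (JRel (LOp R)) := by
  refine ⟨sw1, continuous_sw1, ?_⟩
  rintro x q _ ⟨z, hz, ht⟩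
  choose w hw hR using hz
  refine ⟨fun j => w (Nat.unpair j).1 (Nat.unpair j).2, ?_, ?_⟩
  · intro j
    obtain ⟨M, hM⟩ := hw (Nat.unpair j).1 (Nat.unpair j).2
    refine ⟨M, fun m hm => ?_⟩
    have := hM m hm
    simpa [Row, sw1] using this
  · refine ⟨z, fun n => ?_, ht⟩
    have : Row (fun j => w (Nat.unpair j).1 (Nat.unpair j).2) n = w n := by
      funext i; simp [Row]
    rw [this]; exact hR n

theorem swap_JL {P : ℝ → Prop} (R : (ℕ → ℚ) → ℝ → Prop) :
    Red P (JRel (LOp R)) (LOp (JRel R)) := by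
  refine ⟨sw2, continuous_sw2, ?_⟩
  rintro x q _ ⟨Z, hZ, z, hR, ht⟩
  refine ⟨z, fun n => ?_, ht⟩
  refine ⟨Row Z n, fun i => ?_, hR n⟩
  obtain ⟨M, hM⟩ := hZ (Nat.pair n i)
  refine ⟨M, fun m hm => ?_⟩
  have := hM m hm
  simpa [Row, sw2] using this

def tl (i : ℕ) : ℚ := ((2:ℚ) ^ i)⁻¹

theorem tl_cast (i : ℕ) : ((tl i : ℚ) : ℝ) = (2:ℝ) ^ (-(i:ℤ)) := by
  rw [zpow_neg, zpow_natCast]; simp [tl]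

theorem pow2_tendsto : Tendsto (fun n : ℕ => (2:ℝ) ^ (-(n:ℤ))) atTop (nhds 0) := by
  have : (fun n : ℕ => (2:ℝ) ^ (-(n:ℤ))) = fun n : ℕ => ((2:ℝ)⁻¹) ^ n := by
    funext n; rw [zpow_neg, zpow_natCast, inv_pow]
  rw [this]
  exact tendsto_pow_atTop_nhds_zero_of_lt_one (by norm_num) (by norm_num)

/-- consistency of the first `n+1` rows at stage `m` -/
def cons (q : ℕ → ℚ) (m n : ℕ) : Prop :=
  ∀ j ≤ n, ∀ i ≤ j, |q (Nat.pair i m) - q (Nat.pair j m)| ≤ tl i + tl j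

instance (q : ℕ → ℚ) (m n : ℕ) : Decidable (cons q m n) := by
  unfold cons; infer_instance

def pick (q : ℕ → ℚ) (m : ℕ) : ℕ := Nat.findGreatest (cons q m) m

def consG (q : ℕ → ℚ) : ℕ → ℚ := fun m => q (Nat.pair (pick q m) m)

theorem pair_le_bound (i m : ℕ) (h : i ≤ m) : Nat.pair i m < m*m + 2*m + 1 := by
  rw [Nat.pair]
  split
  · omega
  · have : i = m := le_antisymm h (Nat.le_of_not_lt (by assumption))
    subst this; omega

theorem findGreatest_congr {P P' : ℕ → Prop} [DecidablePred P] [DecidablePred P'] :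
    ∀ b, (∀ n, n ≤ b → (P n ↔ P' n)) → Nat.findGreatest P b = Nat.findGreatest P' b := by
  intro b
  induction b with
  | zero => intro _; rfl
  | succ b ih =>
    intro h
    rw [Nat.findGreatest_succ, Nat.findGreatest_succ]
    by_cases hP : P (b+1)
    · rw [if_pos hP, if_pos ((h _ le_rfl).1 hP)]
    · rw [if_neg hP, if_neg (fun h' => hP ((h _ le_rfl).2 h'))]
      exact ih (fun n hn => h n (le_trans hn (Nat.le_succ b)))

theorem consG_continuous : Continuous consG := by
  apply continuous_of_dep
  intro m
  refine ⟨m*m + 2*m + 1, fun q q' hqq => ?_⟩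
  have hm : ∀ i ≤ m, q (Nat.pair i m) = q' (Nat.pair i m) := fun i hi =>
    hqq _ (pair_le_bound i m hi)
  have hiff : ∀ n, n ≤ m → (cons q m n ↔ cons q' m n) := by
    intro n hn
    unfold cons
    constructor <;> intro h j hj i hi
    · rw [← hm i (le_trans (le_trans hi hj) hn), ← hm j (le_trans hj hn)]
      exact h j hj i hi
    · rw [hm i (le_trans (le_trans hi hj) hn), hm j (le_trans hj hn)]
      exact h j hj i hi
  have hp : pick q m = pick q' m := findGreatest_congr m hiff
  show q (Nat.pair (pick q m) m) = q' (Nat.pair (pick q' m) m)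
  rw [hp, hm _ (hp ▸ Nat.findGreatest_le m)]

theorem red_jrho_tend : Red (fun _ => True) (JRel IsRhoName) TendRep := by
  refine ⟨consG, consG_continuous, ?_⟩
  rintro x q _ ⟨z, hz, hRho⟩
  -- key estimate
  have key : ∀ n : ℕ, ∃ N, ∀ m, N ≤ m → |x - (consG q m : ℝ)| ≤ 3 * (2:ℝ) ^ (-(n:ℤ)) := by
    intro n
    -- stage where rows 0..n are all stabilized
    choose Mf hMf using hz
    set N := max n ((Finset.range (n+1)).sup Mf) with hN
    refine ⟨N, fun m hm => ?_⟩
    have hrows : ∀ i ≤ n, q (Nat.pair i m) = z i := by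
      intro i hi
      apply hMf i m
      exact le_trans (le_trans (Finset.le_sup (Finset.mem_range.2 (Nat.lt_succ_of_le hi))) (le_max_right _ _)) hm
    -- cons holds at n
    have hzbound : ∀ i j : ℕ, |z i - z j| ≤ tl i + tl j := by
      intro i j
      have h1 := hRho i; have h2 := hRho j
      have : |(z i:ℝ) - (z j:ℝ)| ≤ (2:ℝ)^(-(i:ℤ)) + (2:ℝ)^(-(j:ℤ)) := by
        calc |(z i:ℝ) - (z j:ℝ)| ≤ |(z i:ℝ) - x| + |x - (z j:ℝ)| := abs_sub_le _ _ _
          _ ≤ _ := add_le_add (by rwa [abs_sub_comm] at h1) h2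
      rw [← tl_cast, ← tl_cast] at this
      exact_mod_cast this
    have hcons : cons q m n := by
      intro j hj i hi
      rw [hrows i (le_trans hi hj), hrows j hj]
      exact hzbound i j
    have hpn : n ≤ pick q m := Nat.le_findGreatest (le_trans (le_max_left _ _) hm) hcons
    set p := pick q m with hpdef
    have hpm : p ≤ m := Nat.findGreatest_le m
    have hcp : cons q m p := Nat.findGreatest_spec (le_trans (le_max_left _ _) hm) hcons
    -- |q(pair n m) - q(pair p m)| ≤ tl n + tl p
    have hnp := hcp p le_rfl n hpn
    have hz_n : q (Nat.pair n m) = z n := hrows n le_rfl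
    have hcast : |(q (Nat.pair n m):ℝ) - (q (Nat.pair p m):ℝ)| ≤ ((tl n:ℚ):ℝ) + ((tl p:ℚ):ℝ) := by
      exact_mod_cast hnp
    have hxz : |x - (z n:ℝ)| ≤ (2:ℝ)^(-(n:ℤ)) := hRho n
    have htlp : ((tl p:ℚ):ℝ) ≤ (2:ℝ)^(-(n:ℤ)) := by
      rw [tl_cast]
      apply zpow_le_zpow_right₀ (by norm_num)
      omega
    have htln : ((tl n:ℚ):ℝ) = (2:ℝ)^(-(n:ℤ)) := tl_cast n
    show |x - (consG q m : ℝ)| ≤ 3 * (2:ℝ) ^ (-(n:ℤ))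
    have : consG q m = q (Nat.pair p m) := rfl
    rw [this]
    calc |x - (q (Nat.pair p m):ℝ)|
        ≤ |x - (z n:ℝ)| + |(z n:ℝ) - (q (Nat.pair p m):ℝ)| := abs_sub_le _ _ _
      _ = |x - (z n:ℝ)| + |(q (Nat.pair n m):ℝ) - (q (Nat.pair p m):ℝ)| := by rw [hz_n]
      _ ≤ (2:ℝ)^(-(n:ℤ)) + (((tl n:ℚ):ℝ) + ((tl p:ℚ):ℝ)) := add_le_add hxz hcast
      _ ≤ (2:ℝ)^(-(n:ℤ)) + ((2:ℝ)^(-(n:ℤ)) + (2:ℝ)^(-(n:ℤ))) := by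
          apply add_le_add_right; rw [htln]; exact add_le_add_right htlp _
      _ = 3 * (2:ℝ)^(-(n:ℤ)) := by ring
  -- conclude tendsto
  show Tendsto (fun m => ((consG q m):ℝ)) atTop (nhds x)
  rw [Metric.tendsto_atTop]
  intro ε hε
  have h3 : Tendsto (fun n : ℕ => 3 * (2:ℝ)^(-(n:ℤ))) atTop (nhds 0) := by
    simpa using pow2_tendsto.const_mul 3
  obtain ⟨n₀, hn₀⟩ := Metric.tendsto_atTop.1 h3 ε hε
  have hn : 3 * (2:ℝ)^(-(n₀:ℤ)) < ε := by
    have := hn₀ n₀ le_rfl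
    rwa [Real.dist_eq, sub_zero, abs_of_nonneg (by positivity)] at this
  obtain ⟨N, hN⟩ := key n₀
  refine ⟨N, fun m hm => ?_⟩
  rw [Real.dist_eq, abs_sub_comm]
  calc |x - (consG q m:ℝ)| ≤ 3 * (2:ℝ)^(-(n₀:ℤ)) := hN m hm
    _ < ε := hn

/-- ρ^{(1)} ≤ L(ρ): constant rows -/
theorem red_tend_lrho : Red (fun _ => True) TendRep (LOp IsRhoName) := by
  refine ⟨fun q k => q (Nat.unpair k).1, continuous_pi (fun _ => continuous_apply _), ?_⟩
  rintro x q _ hq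
  refine ⟨fun n => (q n : ℝ), fun n => ?_, hq⟩
  intro m
  show |(q n:ℝ) - (Row (fun k => q (Nat.unpair k).1) n m : ℝ)| ≤ _
  simp only [Row, Nat.unpair_pair, sub_self, abs_zero]
  positivity

/-- L(ρ) ≤ ρ^{(1)}: diagonal -/
theorem red_lrho_tend : Red (fun _ => True) (LOp IsRhoName) TendRep := by
  refine ⟨fun q n => q (Nat.pair n n), continuous_pi (fun _ => continuous_apply _), ?_⟩
  rintro x q _ ⟨z, hz, ht⟩
  show Tendsto (fun n => ((q (Nat.pair n n)):ℝ)) atTop (nhds x)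
  rw [tendsto_iff_dist_tendsto_zero]
  apply squeeze_zero (g := fun n : ℕ => (2:ℝ)^(-(n:ℤ)) + dist (z n) x) (fun n => dist_nonneg)
  · intro n
    calc dist ((q (Nat.pair n n)):ℝ) x ≤ dist ((q (Nat.pair n n)):ℝ) (z n) + dist (z n) x :=
        dist_triangle _ _ _
      _ ≤ (2:ℝ)^(-(n:ℤ)) + dist (z n) x := by
          apply add_le_add_left
          have := hz n n
          rw [Real.dist_eq, abs_sub_comm]
          exact this
  · have h1 : Tendsto (fun n => dist (z n) x) atTop (nhds 0) :=
      (tendsto_iff_dist_tendsto_zero).1 ht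
    simpa using pow2_tendsto.add h1


----------------------------------------------------------------
-- ρ-side assembly
----------------------------------------------------------------

theorem lop_jiter_swap {P : ℝ → Prop} (k : ℕ) (R : (ℕ → ℚ) → ℝ → Prop) :
    Red P (LOp (JRelIter k R)) (JRelIter k (LOp R)) := by
  induction k with
  | zero => exact red_refl _ _
  | succ k ih =>
    exact red_trans (swap_LJ (JRelIter k R)) (jrel_functor ih)

theorem jiter_lop_swap {P : ℝ → Prop} (k : ℕ) (R : (ℕ → ℚ) → ℝ → Prop) :
    Red P (JRelIter k (LOp R)) (LOp (JRelIter k R)) := by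
  induction k with
  | zero => exact red_refl _ _
  | succ k ih =>
    exact red_trans (jrel_functor ih) (swap_JL (JRelIter k R))

theorem jumpIter_eq_jrelIter : ∀ d, JumpIter d IsRhoName = JRelIter d IsRhoName := by
  intro d
  induction d with
  | zero => rfl
  | succ d ih => show JumpRep (JumpIter d IsRhoName) = JRel (JRelIter d IsRhoName); rw [ih]; rfl

theorem isRhoKName_one : IsRhoKName 1 = TendRep := rfl

theorem isRhoKName_succ_succ (d : ℕ) :
    IsRhoKName (d + 2) = LOp (IsRhoKName (d + 1)) := by
  funext q x
  show IterLim (d+1) (fun n => (q n : ℝ)) x = _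
  simp only [IterLim, LOp, IsRhoKName]
  rfl

theorem red_true_of {α : Type*} {P : α → Prop} {R R' : (ℕ → ℚ) → α → Prop}
    (h : Red (fun _ => True) R R') : Red P R R' := by
  obtain ⟨F, hF, hs⟩ := h; exact ⟨F, hF, fun x q _ hr => hs x q trivial hr⟩

theorem rho_main (d : ℕ) :
    Red (fun _ : ℝ => True) (IsRhoKName d) (JRelIter d IsRhoName) ∧
    Red (fun _ : ℝ => True) (JRelIter d IsRhoName) (IsRhoKName d) := by
  induction d with
  | zero => exact ⟨red_refl _ _, red_refl _ _⟩
  | succ d ih =>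
    match d, ih with
    | 0, _ =>
      constructor
      · show Red _ TendRep (JRel IsRhoName)
        exact red_tend_jrho
      · show Red _ (JRel IsRhoName) TendRep
        exact red_jrho_tend
    | (e+1), ih =>
      rw [isRhoKName_succ_succ e]
      constructor
      · -- forward
        refine red_trans (lop_functor ih.1) ?_
        refine red_trans (lop_jiter_swap (e+1) IsRhoName) ?_
        have hbase : Red (fun _ : ℝ => True) (LOp IsRhoName) (JRel IsRhoName) :=
          red_trans red_lrho_tend red_tend_jrho
        have := jreliter_functor (P := fun _ : ℝ => True) hbase (e+1)
        refine red_trans this ?_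
        rw [← jreliter_succ' (e+1) IsRhoName]
        exact red_refl _ _
      · -- backward
        have h1 : Red (fun _ : ℝ => True) (JRelIter (e+2) IsRhoName)
            (JRelIter (e+1) (JRel IsRhoName)) := by
          rw [← jreliter_succ' (e+1) IsRhoName]; exact red_refl _ _
        refine red_trans h1 ?_
        have hbase : Red (fun _ : ℝ => True) (JRel IsRhoName) (LOp IsRhoName) :=
          red_trans red_jrho_tend red_tend_lrho
        refine red_trans (jreliter_functor hbase (e+1)) ?_
        refine red_trans (jiter_lop_swap (e+1) IsRhoName) ?_
        exact lop_functor ih.2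

----------------------------------------------------------------
-- rho_< side: EReal valuation machinery
----------------------------------------------------------------

noncomputable section

def ecast (q : ℕ → ℚ) : ℕ → EReal := fun n => ((q n : ℝ) : EReal)

def Val (k : ℕ) (b : Bool) (q : ℕ → ℚ) : EReal := AltSupInf k b (ecast q)

theorem val_zero_true (q : ℕ → ℚ) : Val 0 true q = ⨆ n, ecast q n := by
  simp [Val, AltSupInf]

theorem val_zero_false (q : ℕ → ℚ) : Val 0 false q = ⨅ n, ecast q n := by
  simp [Val, AltSupInf]

theorem val_succ_true (k : ℕ) (q : ℕ → ℚ) :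
    Val (k+1) true q = ⨆ n, Val k false (Row q n) := by
  simp only [Val, AltSupInf, if_pos]
  rfl

theorem val_succ_false (k : ℕ) (q : ℕ → ℚ) :
    Val (k+1) false q = ⨅ n, Val k true (Row q n) := by
  simp only [Val, AltSupInf]
  rfl

-- entrywise min / max with a constant
def minc (c : ℚ) (q : ℕ → ℚ) : ℕ → ℚ := fun n => min c (q n)
def maxc (c : ℚ) (q : ℕ → ℚ) : ℕ → ℚ := fun n => max c (q n)
def negq (q : ℕ → ℚ) : ℕ → ℚ := fun n => - q n

theorem ecast_minc (c : ℚ) (q : ℕ → ℚ) (n : ℕ) :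
    ecast (minc c q) n = min ((c:ℝ):EReal) (ecast q n) := by
  simp only [ecast, minc]
  rcases le_total c (q n) with h | h
  · rw [min_eq_left h, min_eq_left]
    exact_mod_cast (by exact_mod_cast h : ((c:ℝ):EReal) ≤ ((q n : ℝ):EReal))
  · rw [min_eq_right h, min_eq_right]
    exact_mod_cast (by exact_mod_cast h : ((q n:ℝ):EReal) ≤ ((c : ℝ):EReal))

theorem ecast_negq (q : ℕ → ℚ) (n : ℕ) : ecast (negq q) n = - ecast q n := by
  simp only [ecast, negq]
  push_cast
  rfl

theorem ereal_neg_iSup (f : ℕ → EReal) : - ⨆ n, f n = ⨅ n, - f n := by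
  apply le_antisymm
  · exact le_iInf fun n => EReal.neg_le_neg_iff.mpr (le_iSup f n)
  · have h : ∀ n, f n ≤ - ⨅ m, - f m := fun n => by
      have h2 := EReal.neg_le_neg_iff.mpr (iInf_le (fun m => - f m) n)
      rwa [neg_neg] at h2
    have := iSup_le h
    calc ⨅ n, -f n = - - ⨅ n, - f n := by rw [neg_neg]
      _ ≤ - ⨆ n, f n := EReal.neg_le_neg_iff.mpr this

theorem ereal_neg_iInf (f : ℕ → EReal) : - ⨅ n, f n = ⨆ n, - f n := by
  have := ereal_neg_iSup (fun n => - f n)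
  simp only [neg_neg] at this
  rw [← this, neg_neg]

theorem min_iSup (c : EReal) (f : ℕ → EReal) : min c (⨆ n, f n) = ⨆ n, min c (f n) :=
  inf_iSup_eq c f

theorem min_iInf (c : EReal) (f : ℕ → EReal) : min c (⨅ n, f n) = ⨅ n, min c (f n) := by
  apply le_antisymm
  · exact le_iInf fun n => le_min (min_le_left _ _) (le_trans (min_le_right _ _) (iInf_le f n))
  · exact le_min (le_trans (iInf_le _ 0) (min_le_left _ _))
      (le_iInf fun n => le_trans (iInf_le _ n) (min_le_right _ _))

theorem row_minc (c : ℚ) (q : ℕ → ℚ) (n : ℕ) : Row (minc c q) n = minc c (Row q n) := rfl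
theorem row_negq (q : ℕ → ℚ) (n : ℕ) : Row (negq q) n = negq (Row q n) := rfl

theorem val_minc (k : ℕ) (b : Bool) (c : ℚ) (q : ℕ → ℚ) :
    Val k b (minc c q) = min ((c:ℝ):EReal) (Val k b q) := by
  induction k generalizing b q with
  | zero =>
    cases b
    · rw [val_zero_false, val_zero_false, min_iInf]
      exact iInf_congr (ecast_minc c q)
    · rw [val_zero_true, val_zero_true, min_iSup]
      exact iSup_congr (ecast_minc c q)
  | succ k ih =>
    cases b
    · rw [val_succ_false, val_succ_false, min_iInf]
      exact iInf_congr (fun n => by rw [row_minc, ih])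
    · rw [val_succ_true, val_succ_true, min_iSup]
      exact iSup_congr (fun n => by rw [row_minc, ih])

theorem val_negq (k : ℕ) (b : Bool) (q : ℕ → ℚ) :
    Val k b (negq q) = - Val k (!b) q := by
  induction k generalizing b q with
  | zero =>
    cases b
    · rw [val_zero_false, (by rfl : (!false) = true), val_zero_true, ereal_neg_iSup]
      exact iInf_congr (ecast_negq q)
    · rw [val_zero_true, (by rfl : (!true) = false), val_zero_false, ereal_neg_iInf]
      exact iSup_congr (ecast_negq q)
  | succ k ih =>
    cases b
    · rw [val_succ_false, (by rfl : (!false) = true), val_succ_true, ereal_neg_iSup]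
      exact iInf_congr (fun n => by rw [row_negq, ih]; rfl)
    · rw [val_succ_true, (by rfl : (!true) = false), val_succ_false, ereal_neg_iInf]
      exact iSup_congr (fun n => by rw [row_negq, ih]; rfl)

-- sup over rational caps
theorem iSup_min_rat (e : ℕ → ℚ) (he : Function.Surjective e) (a : EReal) :
    ⨆ c : ℕ, min (((e c : ℚ):ℝ):EReal) a = a := by
  apply le_antisymm
  · exact iSup_le fun c => min_le_right _ _
  · rw [le_iSup_iff]
    intro b hb
    by_contra hab
    push_neg at hab
    obtain ⟨c, hc1, hc2⟩ := EReal.exists_rat_btwn_of_lt hab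
    obtain ⟨c₀, rfl⟩ := he c
    have hmin : min (((e c₀ : ℚ):ℝ):EReal) a = (((e c₀ : ℚ):ℝ):EReal) :=
      min_eq_left (le_of_lt hc2)
    exact absurd (hmin ▸ hb c₀) (not_le_of_gt hc1)

end


----------------------------------------------------------------
-- rho_< side: relations and easy base lemma
----------------------------------------------------------------

def TRRel (k : ℕ) : (ℕ → ℚ) → EReal → Prop := fun q y => y = Val k true q
def FRRel (k : ℕ) : (ℕ → ℚ) → EReal → Prop := fun q y => y = Val k false q

/-- J(ρ_<) ≤ ρ_<^{(1)} : `q'(n,k)(m) = q(n, max k m)` -/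
def star2G (q : ℕ → ℚ) : ℕ → ℚ := fun k =>
  q (Nat.pair (Nat.unpair (Nat.unpair k).1).1
      (max (Nat.unpair (Nat.unpair k).1).2 (Nat.unpair k).2))

theorem star2 {P : EReal → Prop} : Red P (JRel (TRRel 0)) (TRRel 1) := by
  refine ⟨star2G, continuous_pi (fun _ => continuous_apply _), ?_⟩
  rintro y q _ ⟨z, hz, hz0⟩
  show y = Val 1 true (star2G q)
  rw [val_succ_true]
  have hrow : ∀ j m, Row (star2G q) j m
      = q (Nat.pair (Nat.unpair j).1 (max (Nat.unpair j).2 m)) := by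
    intro j m; simp [Row, star2G]
  choose M hM using hz
  have hI : ∀ n k2, Val 0 false (fun m => q (Nat.pair n (max k2 m))) ≤ ecast z n := by
    intro n k2
    rw [val_zero_false]
    refine le_trans (iInf_le _ (max k2 (M n))) ?_
    have : q (Nat.pair n (max k2 (max k2 (M n)))) = z n := by
      have := hM n (max k2 (M n)) (le_max_right _ _)
      simpa [Row] using this
    rw [show ecast (fun m => q (Nat.pair n (max k2 m))) (max k2 (M n))
        = ((q (Nat.pair n (max k2 (max k2 (M n)))) : ℝ) : EReal) by simp [ecast], this]
    exact le_refl _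
  have hI2 : ∀ n, Val 0 false (fun m => q (Nat.pair n (max (M n) m))) = ecast z n := by
    intro n
    rw [val_zero_false]
    have : ∀ m, ecast (fun m => q (Nat.pair n (max (M n) m))) m = ecast z n := by
      intro m
      have := hM n (max (M n) m) (le_max_left _ _)
      simp only [Row] at this
      simp [ecast, this]
    rw [iInf_congr this, iInf_const]
  have hval : ∀ j, Val 0 false (Row (star2G q) j)
      = Val 0 false (fun m => q (Nat.pair (Nat.unpair j).1 (max (Nat.unpair j).2 m))) := by
    intro j
    congr 1
    funext m
    exact hrow j m
  calc y = ⨆ n, ecast z n := hz0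
    _ = ⨆ j, Val 0 false (Row (star2G q) j) := by
        apply le_antisymm
        · apply iSup_le
          intro n
          have heq : Val 0 false (Row (star2G q) (Nat.pair n (M n)))
              = Val 0 false (fun m => q (Nat.pair n (max (M n) m))) := by
            have := hval (Nat.pair n (M n))
            simpa using this
          rw [← hI2 n, ← heq]
          exact le_iSup (fun j => Val 0 false (Row (star2G q) j)) (Nat.pair n (M n))
        · apply iSup_le
          intro j
          rw [hval j]
          exact le_trans (hI _ _) (le_iSup (fun n => ecast z n) (Nat.unpair j).1)

----------------------------------------------------------------
-- rho_< side: hard base lemma ρ_<^{(1)} ≤ J(ρ_<)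
----------------------------------------------------------------

noncomputable def eRat : ℕ → ℚ := (exists_surjective_nat ℚ).choose

theorem eRat_surj : Function.Surjective eRat := (exists_surjective_nat ℚ).choose_spec

/-- candidate `j = (n, c₀)` is alive at stage `m` -/
def cAlive (q : ℕ → ℚ) (j m : ℕ) : Prop :=
  ∀ m' ≤ m, eRat (Nat.unpair j).2 ≤ q (Nat.pair (Nat.unpair j).1 m')

noncomputable instance (q : ℕ → ℚ) (j m : ℕ) : Decidable (cAlive q j m) := by
  unfold cAlive; exact Nat.decidableBallLE _ _

theorem cAlive_antitone {q : ℕ → ℚ} {j m m'} (h : m ≤ m') (ha : cAlive q j m') :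
    cAlive q j m := fun i hi => ha i (le_trans hi h)

def ptrP (q : ℕ → ℚ) (m j : ℕ) : Prop := j = m + 1 ∨ (j ≤ m ∧ cAlive q j m)

noncomputable instance (q : ℕ → ℚ) (m j : ℕ) : Decidable (ptrP q m j) := by
  unfold ptrP; infer_instance

theorem ptrP_ex (q : ℕ → ℚ) (m : ℕ) : ∃ j, ptrP q m j := ⟨m + 1, Or.inl rfl⟩

noncomputable def ptr (q : ℕ → ℚ) (m : ℕ) : ℕ := Nat.find (ptrP_ex q m)

noncomputable def uQ (q : ℕ → ℚ) (m : ℕ) : ℚ :=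
  if ptr q m ≤ m then eRat (Nat.unpair (ptr q m)).2 else 0

noncomputable def star1F (q : ℕ → ℚ) : ℕ → ℚ := fun k =>
  if cAlive q (Nat.unpair k).1 (Nat.unpair k).2
  then eRat (Nat.unpair (Nat.unpair k).1).2
  else uQ q (Nat.unpair k).2

theorem nat_find_congr {P P' : ℕ → Prop} [DecidablePred P] [DecidablePred P']
    (hP : ∃ n, P n) (hP' : ∃ n, P' n) (h : ∀ n, P n ↔ P' n) :
    Nat.find hP = Nat.find hP' :=
  le_antisymm (Nat.find_le ((h _).2 (Nat.find_spec hP')))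
    (Nat.find_le ((h _).1 (Nat.find_spec hP)))

theorem pair_bound {a b M : ℕ} (ha : a ≤ M) (hb : b ≤ M) : Nat.pair a b < (M+1)*(M+1) := by
  rw [Nat.pair]
  split
  · nlinarith
  · nlinarith

theorem cAlive_congr {q q' : ℕ → ℚ} {j m N : ℕ}
    (hqq : ∀ i < N, q i = q' i) (hN : (max j m + 1) * (max j m + 1) ≤ N) :
    cAlive q j m ↔ cAlive q' j m := by
  have hacc : ∀ m' ≤ m, q (Nat.pair (Nat.unpair j).1 m') = q' (Nat.pair (Nat.unpair j).1 m') := by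
    intro m' hm'
    apply hqq
    apply lt_of_lt_of_le _ hN
    exact pair_bound (le_trans (Nat.unpair_left_le j) (le_max_left _ _))
      (le_trans hm' (le_max_right _ _))
  constructor <;> intro h m' hm'
  · rw [← hacc m' hm']; exact h m' hm'
  · rw [hacc m' hm']; exact h m' hm'

theorem ptr_congr {q q' : ℕ → ℚ} {m N : ℕ}
    (hqq : ∀ i < N, q i = q' i) (hN : (m + 1 + 1) * (m + 1 + 1) ≤ N) :
    ptr q m = ptr q' m := by
  apply nat_find_congr
  intro j
  unfold ptrP
  by_cases hj : j ≤ m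
  · have : (max j m + 1) * (max j m + 1) ≤ N := by
      rw [max_eq_right hj]
      exact le_trans (by nlinarith) hN
    rw [cAlive_congr hqq this]
  · constructor <;> (rintro (h | ⟨h1, h2⟩); exact Or.inl h; exact absurd h1 hj)

theorem star1F_continuous : Continuous star1F := by
  apply continuous_of_dep
  intro k
  set j := (Nat.unpair k).1
  set m := (Nat.unpair k).2
  set B := max j (m+1)
  refine ⟨(B+1)*(B+1), fun q q' hqq => ?_⟩
  have h1 : cAlive q j m ↔ cAlive q' j m := by
    apply cAlive_congr hqq
    have hB : max j m ≤ B := max_le (le_max_left _ _) (le_trans (Nat.le_succ m) (le_max_right _ _))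
    exact Nat.mul_le_mul (Nat.succ_le_succ hB) (Nat.succ_le_succ hB)
  have h2 : ptr q m = ptr q' m := by
    apply ptr_congr hqq
    have hB : m + 1 ≤ B := le_max_right _ _
    exact Nat.mul_le_mul (Nat.succ_le_succ hB) (Nat.succ_le_succ hB)
  show (if cAlive q j m then eRat (Nat.unpair j).2 else uQ q m)
      = (if cAlive q' j m then eRat (Nat.unpair j).2 else uQ q' m)
  unfold uQ
  rw [h2]
  by_cases hc : cAlive q j m
  · rw [if_pos hc, if_pos (h1.1 hc)]
  · rw [if_neg hc, if_neg (fun h => hc (h1.2 h))]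

/-- candidate j is good: alive at all stages -/
def cGood (q : ℕ → ℚ) (j : ℕ) : Prop := ∀ m, cAlive q j m

theorem star1 : Red (fun y : EReal => y ≠ ⊥) (TRRel 1) (JRel (TRRel 0)) := by
  classical
  refine ⟨star1F, star1F_continuous, ?_⟩
  intro y q hy hq
  have hq' : y = ⨆ n, Val 0 false (Row q n) := by rw [hq, val_succ_true]
  set Y : ℕ → EReal := fun n => Val 0 false (Row q n) with hY
  -- alive candidates have value below Y (n j)
  have halive_le : ∀ j, cGood q j → ((eRat (Nat.unpair j).2 : ℝ) : EReal) ≤ Y (Nat.unpair j).1 := by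
    intro j hgood
    show ((eRat (Nat.unpair j).2 : ℝ) : EReal) ≤ Val 0 false (Row q (Nat.unpair j).1)
    rw [val_zero_false]
    apply le_iInf
    intro m
    have := hgood m m le_rfl
    show ((eRat (Nat.unpair j).2 : ℝ) : EReal) ≤ ecast (Row q (Nat.unpair j).1) m
    simp only [ecast, Row]
    exact_mod_cast this
  have hYley : ∀ n, Y n ≤ y := by
    intro n; rw [hq']; exact le_iSup _ n
  -- a rational strictly below Y n yields a good candidate
  have hgood_of_lt : ∀ (n : ℕ) (c : ℚ), ((c:ℝ):EReal) < Y n →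
      ∀ c₀, eRat c₀ = c → cGood q (Nat.pair n c₀) := by
    intro n c hc c₀ hc₀ m m' _
    rw [Nat.unpair_pair]
    have hYle : Y n ≤ ecast (Row q n) m' := by
      show Val 0 false (Row q n) ≤ ecast (Row q n) m'
      rw [val_zero_false]; exact iInf_le _ m'
    have : ((c:ℝ):EReal) ≤ ((q (Nat.pair n m') : ℝ) : EReal) := by
      refine le_trans (le_of_lt hc) (le_trans hYle ?_)
      simp [ecast, Row]
    simp only [hc₀]
    exact_mod_cast this
  -- existence of a good candidate
  have hex_good : ∃ j, cGood q j := by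
    have hexn : ∃ n, Y n ≠ ⊥ := by
      by_contra hall
      push_neg at hall
      apply hy
      rw [hq']
      simp [hall]
    obtain ⟨n, hn⟩ := hexn
    have : (⊥ : EReal) < Y n := Ne.bot_lt hn
    obtain ⟨c, _, hc2⟩ := EReal.exists_rat_btwn_of_lt this
    obtain ⟨c₀, hc₀⟩ := eRat_surj c
    exact ⟨Nat.pair n c₀, hgood_of_lt n c hc2 c₀ hc₀⟩
  -- least good candidate
  set j' : ℕ := Nat.find hex_good with hj'
  have hj'good : cGood q j' := Nat.find_spec hex_good
  -- stabilization of the pointer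
  have hlt_fail : ∀ j < j', ∃ mj, ∀ m, mj ≤ m → ¬ cAlive q j m := by
    intro j hj
    have := Nat.find_min hex_good hj
    unfold cGood at this
    push_neg at this
    obtain ⟨mj, hmj⟩ := this
    exact ⟨mj, fun m hm ha => hmj (cAlive_antitone hm ha)⟩
  choose mj hmj using hlt_fail
  set M0 : ℕ := max j' ((Finset.range j').sup (fun j => if h : j < j' then mj j h else 0)) with hM0
  have hptr : ∀ m, M0 ≤ m → ptr q m = j' := by
    intro m hm
    have hj'm : j' ≤ m := le_trans (le_max_left _ _) hm
    apply le_antisymm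
    · exact Nat.find_le (Or.inr ⟨hj'm, hj'good m⟩)
    · show j' ≤ Nat.find (ptrP_ex q m)
      rw [Nat.le_find_iff]
      intro j hj
      rintro (h | ⟨h1, h2⟩)
      · omega
      · refine hmj j hj m ?_ h2
        refine le_trans ?_ hm
        refine le_trans ?_ (le_max_right _ _)
        have := Finset.le_sup (f := fun j => if h : j < j' then mj j h else 0)
          (Finset.mem_range.2 hj)
        simpa [hj] using this
  set w : ℚ := eRat (Nat.unpair j').2 with hw
  have huQ : ∀ m, M0 ≤ m → uQ q m = w := by
    intro m hm
    unfold uQ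
    rw [hptr m hm, if_pos (le_trans (le_max_left _ _) hm)]
  have hwle : ((w:ℝ):EReal) ≤ y := le_trans (halive_le j' hj'good) (hYley _)
  -- the row limits
  set z : ℕ → ℚ := fun j => if cGood q j then eRat (Nat.unpair j).2 else w with hz
  refine ⟨z, ?_, ?_⟩
  · -- rows eventually constant
    intro j
    by_cases hgood : cGood q j
    · refine ⟨0, fun m _ => ?_⟩
      show star1F q (Nat.pair j m) = z j
      simp only [star1F, Nat.unpair_pair, hz]
      rw [if_pos (hgood m), if_pos hgood]
    · unfold cGood at hgood
      push_neg at hgood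
      obtain ⟨m0, hm0⟩ := hgood
      refine ⟨max m0 M0, fun m hm => ?_⟩
      show star1F q (Nat.pair j m) = z j
      simp only [star1F, Nat.unpair_pair, hz]
      have hdead : ¬ cAlive q j m := fun h =>
        hm0 (cAlive_antitone (le_trans (le_max_left _ _) hm) h)
      rw [if_neg hdead, if_neg (fun h : cGood q j => hm0 (h m0)),
        huQ m (le_trans (le_max_right _ _) hm)]
  · -- the limits form a ρ_<-name of y
    show y = Val 0 true z
    rw [val_zero_true]
    apply le_antisymm
    · -- y ≤ sup
      rw [le_iSup_iff]
      intro b hb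
      rw [hq']
      apply iSup_le
      intro n
      apply le_of_forall_lt
      intro d hd
      obtain ⟨c, hc1, hc2⟩ := EReal.exists_rat_btwn_of_lt hd
      obtain ⟨c₀, hc₀⟩ := eRat_surj c
      have hgood := hgood_of_lt n c hc2 c₀ hc₀
      have : ecast z (Nat.pair n c₀) = ((c:ℝ):EReal) := by
        simp only [ecast, hz]
        rw [if_pos hgood, Nat.unpair_pair, hc₀]
      exact lt_of_lt_of_le hc1 (this ▸ hb (Nat.pair n c₀))
    · -- sup ≤ y
      apply iSup_le
      intro j
      simp only [ecast, hz]
      by_cases hgood : cGood q j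
      · rw [if_pos hgood]
        exact le_trans (halive_le j hgood) (hYley _)
      · rw [if_neg hgood]
        exact hwle

----------------------------------------------------------------
-- rho_< side: operators, swaps, negation, induction
----------------------------------------------------------------

def ROp (Φ : (ℕ → EReal) → EReal) (R : (ℕ → ℚ) → EReal → Prop) :
    (ℕ → ℚ) → EReal → Prop :=
  fun q y => ∃ v : ℕ → EReal, (∀ n, R (Row q n) (v n)) ∧ y = Φ v

noncomputable def supΦ : (ℕ → EReal) → EReal := fun v => ⨆ n, v n

theorem trrel_succ (k : ℕ) : TRRel (k+1) = ROp supΦ (FRRel k) := by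
  funext q y
  apply propext
  constructor
  · intro h
    exact ⟨fun n => Val k false (Row q n), fun n => rfl, by rw [h, val_succ_true]; rfl⟩
  · rintro ⟨v, hv, hy⟩
    show y = Val (k+1) true q
    rw [val_succ_true, hy]
    show supΦ v = _
    unfold supΦ
    exact iSup_congr (fun n => by rw [hv n])

theorem swap_RJ {P : EReal → Prop} (Φ : (ℕ → EReal) → EReal) (R : (ℕ → ℚ) → EReal → Prop) :
    Red P (ROp Φ (JRel R)) (JRel (ROp Φ R)) := by
  refine ⟨sw1, continuous_sw1, ?_⟩
  rintro y q _ ⟨v, hv, hy⟩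
  choose w hw hR using hv
  refine ⟨fun j => w (Nat.unpair j).1 (Nat.unpair j).2, ?_, ?_⟩
  · intro j
    obtain ⟨M, hM⟩ := hw (Nat.unpair j).1 (Nat.unpair j).2
    refine ⟨M, fun m hm => ?_⟩
    have := hM m hm
    simpa [Row, sw1] using this
  · refine ⟨v, fun n => ?_, hy⟩
    have : Row (fun j => w (Nat.unpair j).1 (Nat.unpair j).2) n = w n := by
      funext i; simp [Row]
    rw [this]; exact hR n

theorem swap_JR {P : EReal → Prop} (Φ : (ℕ → EReal) → EReal) (R : (ℕ → ℚ) → EReal → Prop) :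
    Red P (JRel (ROp Φ R)) (ROp Φ (JRel R)) := by
  refine ⟨sw2, continuous_sw2, ?_⟩
  rintro y q _ ⟨Z, hZ, v, hR, hy⟩
  refine ⟨v, fun n => ?_, hy⟩
  refine ⟨Row Z n, fun i => ?_, hR n⟩
  obtain ⟨M, hM⟩ := hZ (Nat.pair n i)
  refine ⟨M, fun m hm => ?_⟩
  have := hM m hm
  simpa [Row, sw2] using this

theorem rop_jiter_swap {P : EReal → Prop} (Φ : (ℕ → EReal) → EReal) (k : ℕ)
    (R : (ℕ → ℚ) → EReal → Prop) :
    Red P (ROp Φ (JRelIter k R)) (JRelIter k (ROp Φ R)) := by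
  induction k with
  | zero => exact red_refl _ _
  | succ k ih => exact red_trans (swap_RJ Φ (JRelIter k R)) (jrel_functor ih)

theorem jiter_rop_swap {P : EReal → Prop} (Φ : (ℕ → EReal) → EReal) (k : ℕ)
    (R : (ℕ → ℚ) → EReal → Prop) :
    Red P (JRelIter k (ROp Φ R)) (ROp Φ (JRelIter k R)) := by
  induction k with
  | zero => exact red_refl _ _
  | succ k ih => exact red_trans (jrel_functor ih) (swap_JR Φ (JRelIter k R))

theorem rop_functor {P : EReal → Prop} {Φ : (ℕ → EReal) → EReal}
    {R R' : (ℕ → ℚ) → EReal → Prop}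
    (h : Red (fun _ : EReal => True) R R') : Red P (ROp Φ R) (ROp Φ R') := by
  obtain ⟨F, hF, hFs⟩ := h
  refine ⟨rowMap F, continuous_rowMap hF, ?_⟩
  rintro y q _ ⟨v, hv, hy⟩
  exact ⟨v, fun n => (row_rowMap F q n) ▸ hFs (v n) (Row q n) trivial (hv n), hy⟩

/-- capped version of the sup-level of a name -/
noncomputable def capq (q : ℕ → ℚ) : ℕ → ℚ := fun k0 =>
  min (eRat (Nat.unpair (Nat.unpair k0).1).2)
    (q (Nat.pair (Nat.unpair (Nat.unpair k0).1).1 (Nat.unpair k0).2))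

theorem continuous_capq : Continuous capq := by
  apply continuous_pi
  intro k0
  exact (continuous_of_discreteTopology
    (f := fun a : ℚ => min (eRat (Nat.unpair (Nat.unpair k0).1).2) a)).comp
    (continuous_apply _)

theorem row_capq (q : ℕ → ℚ) (j : ℕ) :
    Row (capq q) j = minc (eRat (Nat.unpair j).2) (Row q (Nat.unpair j).1) := by
  funext m; simp [Row, capq, minc]

def CapRel (k : ℕ) : (ℕ → ℚ) → EReal → Prop := fun q y =>
  ∃ v : ℕ → EReal, (∀ n, FRRel k (Row q n) (v n) ∧ v n ≠ ⊤) ∧ y = ⨆ n, v n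

theorem red_cap {P : EReal → Prop} (k : ℕ) : Red P (TRRel (k+1)) (CapRel k) := by
  refine ⟨capq, continuous_capq, ?_⟩
  intro y q _ hq
  refine ⟨fun j => min (((eRat (Nat.unpair j).2 : ℚ):ℝ):EReal) (Val k false (Row q (Nat.unpair j).1)),
    fun j => ⟨?_, ?_⟩, ?_⟩
  · show _ = Val k false (Row (capq q) j)
    rw [row_capq, val_minc]
  · exact ne_top_of_le_ne_top (EReal.coe_ne_top _) (min_le_left _ _)
  · rw [hq, val_succ_true]
    rw [iSup_unpair (f := fun n c₀ => min (((eRat c₀ : ℚ):ℝ):EReal) (Val k false (Row q n)))]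
    apply le_antisymm
    · apply iSup_le; intro n
      rw [← iSup_min_rat eRat eRat_surj (Val k false (Row q n))]
      apply le_iSup_of_le n
      exact le_refl _
    · apply iSup_le; intro n
      apply le_iSup_of_le n
      rw [iSup_min_rat eRat eRat_surj]

theorem red_caprel {P : EReal → Prop} (k : ℕ)
    (hB : Red (fun y : EReal => y ≠ ⊤) (FRRel k) (JRelIter k (FRRel 0))) :
    Red P (CapRel k) (ROp supΦ (JRelIter k (FRRel 0))) := by
  obtain ⟨G, hG, hGs⟩ := hB
  refine ⟨rowMap G, continuous_rowMap hG, ?_⟩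
  rintro y q _ ⟨v, hv, hy⟩
  exact ⟨v, fun n => (row_rowMap G q n) ▸ hGs (v n) (Row q n) (hv n).2 (hv n).1, hy⟩

theorem continuous_negq : Continuous negq :=
  continuous_pi fun n => (continuous_of_discreteTopology (f := fun a : ℚ => -a)).comp
    (continuous_apply n)

theorem trrel0_neg {q : ℕ → ℚ} {y : EReal} (h : TRRel 0 q y) : FRRel 0 (negq q) (-y) := by
  show -y = Val 0 false (negq q)
  rw [val_negq]
  show -y = - Val 0 true q
  rw [← h]

theorem frrel0_neg {q : ℕ → ℚ} {y : EReal} (h : FRRel 0 q y) : TRRel 0 (negq q) (-y) := by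
  show -y = Val 0 true (negq q)
  rw [val_negq]
  show -y = - Val 0 false q
  rw [← h]

theorem jiter_neg {k : ℕ} {R R' : (ℕ → ℚ) → EReal → Prop}
    (hbase : ∀ q y, R q y → R' (negq q) (-y)) :
    ∀ q y, JRelIter k R q y → JRelIter k R' (negq q) (-y) := by
  induction k with
  | zero => exact hbase
  | succ k ih =>
    rintro q y ⟨z, hz, hR⟩
    refine ⟨negq z, fun n => ?_, ih z y hR⟩
    obtain ⟨M, hM⟩ := hz n
    refine ⟨M, fun m hm => ?_⟩
    show - q (Nat.pair n m) = - z n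
    have := hM m hm
    rw [show Row q n m = q (Nat.pair n m) from rfl] at this
    rw [this]

theorem neg_red {P P' : EReal → Prop} {R R' S S' : (ℕ → ℚ) → EReal → Prop}
    (h : Red P R R')
    (hPP : ∀ y, P' y → P (-y))
    (hS : ∀ q y, S q y → R (negq q) (-y))
    (hS' : ∀ q y, R' q (-y) → S' (negq q) y) :
    Red P' S S' := by
  obtain ⟨F, hF, hFs⟩ := h
  refine ⟨fun q => negq (F (negq q)), continuous_negq.comp (hF.comp continuous_negq), ?_⟩
  intro y q hP hq
  exact hS' (F (negq q)) y (hFs (-y) (negq q) (hPP y hP) (hS q y hq))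

theorem lt_main (k : ℕ) :
    (Red (fun y : EReal => y ≠ ⊥) (TRRel k) (JRelIter k (TRRel 0)) ∧
     Red (fun _ : EReal => True) (JRelIter k (TRRel 0)) (TRRel k)) := by
  induction k with
  | zero => exact ⟨red_refl _ _, red_refl _ _⟩
  | succ k ih =>
    obtain ⟨hA, hA'⟩ := ih
    -- dual reductions by negation
    have hB : Red (fun y : EReal => y ≠ ⊤) (FRRel k) (JRelIter k (FRRel 0)) := by
      refine neg_red hA ?_ ?_ ?_
      · intro y hy h; exact hy (by simpa [EReal.neg_eq_bot_iff] using h)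
      · intro q y hq
        show -y = Val k true (negq q)
        rw [val_negq]
        show -y = - Val k false q
        rw [← hq]
      · intro q y hq
        have := jiter_neg (k := k) (fun q y h => trrel0_neg h) q (-y) hq
        rwa [neg_neg] at this
    have hB' : Red (fun _ : EReal => True) (JRelIter k (FRRel 0)) (FRRel k) := by
      refine neg_red hA' (fun _ _ => trivial) ?_ ?_
      · intro q y hq
        exact jiter_neg (k := k) (fun q y h => frrel0_neg h) q y hq
      · intro q y hq
        show y = Val k false (negq q)
        rw [val_negq]
        show y = - Val k true q
        rw [← hq, neg_neg]
    constructor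
    · -- forward
      refine red_trans (red_cap k) ?_
      refine red_trans (red_caprel k hB) ?_
      refine red_trans (rop_jiter_swap supΦ k (FRRel 0)) ?_
      rw [← trrel_succ 0]
      have hstar : Red (fun y : EReal => y ≠ ⊥) (JRelIter k (TRRel 1))
          (JRelIter k (JRel (TRRel 0))) := jreliter_functor star1 k
      refine red_trans hstar ?_
      rw [← jreliter_succ' k (TRRel 0)]
      exact red_refl _ _
    · -- backward
      have h1 : Red (fun _ : EReal => True) (JRelIter (k+1) (TRRel 0))
          (JRelIter k (JRel (TRRel 0))) := by
        rw [← jreliter_succ' k (TRRel 0)]; exact red_refl _ _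
      refine red_trans h1 ?_
      refine red_trans (jreliter_functor star2 k) ?_
      rw [trrel_succ 0]
      refine red_trans (jiter_rop_swap supΦ k (FRRel 0)) ?_
      rw [trrel_succ k]
      exact rop_functor hB'

----------------------------------------------------------------
-- bridges and final theorem
----------------------------------------------------------------

theorem jumpIterLt_iff : ∀ (d : ℕ) (q : ℕ → ℚ) (x : ℝ),
    JumpIter d IsRhoLtName q x ↔ JRelIter d (TRRel 0) q (x : EReal) := by
  intro d
  induction d with
  | zero =>
    intro q x
    show ((x : EReal) = ⨆ n, ((q n : ℝ) : EReal)) ↔ ((x:EReal) = Val 0 true q)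
    rw [val_zero_true]
    exact Iff.rfl
  | succ d ih =>
    intro q x
    constructor
    · rintro ⟨z, hz, hR⟩
      exact ⟨z, hz, (ih z x).1 hR⟩
    · rintro ⟨z, hz, hR⟩
      exact ⟨z, hz, (ih z x).2 hR⟩

theorem isRhoLtKName_iff (d : ℕ) (q : ℕ → ℚ) (x : ℝ) :
    IsRhoLtKName d q x ↔ TRRel d q (x : EReal) := Iff.rfl

/-- For every `d ≥ 0`, `ρ^{(d)}` is continuously equivalent to the
`d`-fold jump `J^d(ρ)`, and `ρ_<^{(d)}` is continuously equivalent to `J^d(ρ_<)`. -/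
theorem stmt8 (d : ℕ) :
    ((∃ F : (ℕ → ℚ) → (ℕ → ℚ),
        ContinuousOn F {q | ∃ x : ℝ, IsRhoKName d q x} ∧
        ∀ (x : ℝ) (q : ℕ → ℚ), IsRhoKName d q x → JumpIter d IsRhoName (F q) x) ∧
     (∃ G : (ℕ → ℚ) → (ℕ → ℚ),
        ContinuousOn G {q | ∃ x : ℝ, JumpIter d IsRhoName q x} ∧
        ∀ (x : ℝ) (q : ℕ → ℚ), JumpIter d IsRhoName q x → IsRhoKName d (G q) x)) ∧
    ((∃ F : (ℕ → ℚ) → (ℕ → ℚ),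
        ContinuousOn F {q | ∃ x : ℝ, IsRhoLtKName d q x} ∧
        ∀ (x : ℝ) (q : ℕ → ℚ), IsRhoLtKName d q x → JumpIter d IsRhoLtName (F q) x) ∧
     (∃ G : (ℕ → ℚ) → (ℕ → ℚ),
        ContinuousOn G {q | ∃ x : ℝ, JumpIter d IsRhoLtName q x} ∧
        ∀ (x : ℝ) (q : ℕ → ℚ), JumpIter d IsRhoLtName q x → IsRhoLtKName d (G q) x)) := by
  refine ⟨⟨?_, ?_⟩, ?_, ?_⟩
  · obtain ⟨F, hF, hs⟩ := (rho_main d).1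
    refine ⟨F, hF.continuousOn, fun x q h => ?_⟩
    rw [jumpIter_eq_jrelIter]
    exact hs x q trivial h
  · obtain ⟨G, hG, hs⟩ := (rho_main d).2
    refine ⟨G, hG.continuousOn, fun x q h => ?_⟩
    rw [jumpIter_eq_jrelIter] at h
    exact hs x q trivial h
  · obtain ⟨F, hF, hs⟩ := (lt_main d).1
    refine ⟨F, hF.continuousOn, fun x q h => ?_⟩
    rw [jumpIterLt_iff]
    exact hs (x : EReal) q (EReal.coe_ne_bot x) ((isRhoLtKName_iff d q x).1 h)
  · obtain ⟨G, hG, hs⟩ := (lt_main d).2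
    refine ⟨G, hG.continuousOn, fun x q h => ?_⟩
    rw [isRhoLtKName_iff]
    exact hs (x : EReal) q trivial ((jumpIterLt_iff d q x).1 h)
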